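/- arXiv:1406.1148 — 4 statements merged into one kernel-verified Lean document; each statement's English description precedes it below -/
import Mathlib

section
/- Let ψ : ℕ → ℕ be positive with limsup_{n→∞} (log ψ(n))/n = log B, 1 < B < ∞. Then liminf_{n→∞} (ψ(1)+⋯+ψ(n))/ψ(n) < ∞. -/
/-!
If `Sₙ / ψ(n) → ∞`, then eventually `Sₙ₊₁ - Sₙ = ψ(n+1) ≤ (1 - 1/r) Sₙ₊₁` for any fixed `r > 1`,
i.e. `Sₙ₊₁ ≤ r Sₙ`. Hence `ψ(n) ≤ Sₙ = O(rⁿ)` and `limsup (log ψ(n))/n ≤ log r`; taking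
`1 < r < B` contradicts the hypothesis on the limsup.
-/

open Filter

theorem exists_eventually_le_mul_pow_of_eventually_le_mul {u : ℕ → ℝ} {r : ℝ} (hr : 0 < r)
    (h : ∀ᶠ n in atTop, u (n + 1) ≤ r * u n) : ∃ C, ∀ᶠ n in atTop, u n ≤ C * r ^ n := by
  obtain ⟨N, hN⟩ := eventually_atTop.1 h
  refine ⟨u N / r ^ N, eventually_atTop.2 ⟨N, fun n hn => ?_⟩⟩
  induction n, hn using Nat.le_induction with
  | base => rw [div_mul_cancel₀ _ (pow_ne_zero N hr.ne')]
  | succ n hn ih =>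
    calc u (n + 1) ≤ r * u n := hN n hn
      _ ≤ r * (u N / r ^ N * r ^ n) := mul_le_mul_of_nonneg_left ih hr.le
      _ = u N / r ^ N * r ^ (n + 1) := by ring

theorem limsup_log_div_le_log_of_eventually_le_mul_pow {f : ℕ → ℝ} (hf : ∀ n, 1 ≤ f n)
    {C r : ℝ} (hr : 0 < r) (h : ∀ᶠ n in atTop, f n ≤ C * r ^ n) :
    limsup (fun n => Real.log (f n) / n) atTop ≤ Real.log r := by
  have hC : 0 < C := by
    obtain ⟨n, hn⟩ := h.exists
    exact pos_of_mul_pos_left (zero_lt_one.trans_le ((hf n).trans hn)) (pow_pos hr n).le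
  have hbound : ∀ᶠ n : ℕ in atTop, Real.log (f n) / n ≤ Real.log C / n + Real.log r := by
    filter_upwards [h, eventually_gt_atTop 0] with n hn hn0
    have hlog : Real.log (f n) ≤ Real.log C + n * Real.log r := by
      rw [← Real.log_pow, ← Real.log_mul hC.ne' (pow_pos hr n).ne']
      exact Real.log_le_log (zero_lt_one.trans_le (hf n)) hn
    rw [div_add' _ _ _ (by positivity)]
    gcongr
    linarith
  have hlim : Tendsto (fun n : ℕ => Real.log C / n + Real.log r) atTop (nhds (Real.log r)) := by
    simpa using (tendsto_const_div_atTop_nhds_zero_nat (Real.log C)).add_const (Real.log r)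
  have hbdd : IsBoundedUnder (· ≥ ·) atTop fun n : ℕ => Real.log (f n) / n :=
    isBoundedUnder_of ⟨0, fun n => div_nonneg (Real.log_nonneg (hf n)) n.cast_nonneg⟩
  calc limsup (fun n => Real.log (f n) / n) atTop
      ≤ limsup (fun n : ℕ => Real.log C / n + Real.log r) atTop :=
        limsup_le_limsup hbound hbdd.isCoboundedUnder_le hlim.isBoundedUnder_le
    _ = Real.log r := hlim.limsup_eq

theorem sum_Icc_succ_le_mul_of_le (a : ℕ → ℝ) {r : ℝ} (hr : 1 < r) {n : ℕ}
    (h : r / (r - 1) * a (n + 1) ≤ ∑ k ∈ Finset.Icc 1 (n + 1), a k) :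
    ∑ k ∈ Finset.Icc 1 (n + 1), a k ≤ r * ∑ k ∈ Finset.Icc 1 n, a k := by
  rw [Finset.sum_Icc_succ_top (by omega)] at h ⊢
  rw [div_mul_eq_mul_div, div_le_iff₀ (by linarith)] at h
  linarith

theorem stmt3 (ψ : ℕ → ℕ) (hψ : ∀ n, 1 ≤ ψ n) (B : ℝ) (hB : 1 < B)
    (h : limsup (fun n => Real.log (ψ n) / n) atTop = Real.log B) :
    liminf (fun n => (((∑ k ∈ Finset.Icc 1 n, (ψ k : ℝ)) / (ψ n : ℝ) : ℝ) : EReal)) atTop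
      < ⊤ := by
  set S : ℕ → ℝ := fun n => ∑ k ∈ Finset.Icc 1 n, (ψ k : ℝ)
  have hψ' : ∀ n, (1 : ℝ) ≤ ψ n := fun n => by exact_mod_cast hψ n
  by_contra hlim
  obtain ⟨r, hr, hrB⟩ := exists_between hB
  have hratio : ∀ᶠ n in atTop, r / (r - 1) < S n / ψ n := by
    have hlt : ((r / (r - 1) : ℝ) : EReal) < liminf (fun n => ((S n / ψ n : ℝ) : EReal)) atTop :=
      (top_le_iff.1 (not_lt.1 hlim)).symm ▸ EReal.coe_lt_top _
    filter_upwards [eventually_lt_of_lt_liminf hlt] with n hn using EReal.coe_lt_coe_iff.1 hn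
  have hstep : ∀ᶠ n in atTop, S (n + 1) ≤ r * S n :=
    (tendsto_add_atTop_nat 1).eventually hratio |>.mono fun n hn =>
      sum_Icc_succ_le_mul_of_le _ hr ((lt_div_iff₀ (by linarith [hψ' (n + 1)])).1 hn).le
  obtain ⟨C, hC⟩ := exists_eventually_le_mul_pow_of_eventually_le_mul (by linarith) hstep
  have hψC : ∀ᶠ n in atTop, (ψ n : ℝ) ≤ C * r ^ n := by
    filter_upwards [hC, eventually_ge_atTop 1] with n hn hn1
    exact (Finset.single_le_sum (fun k _ => by linarith [hψ' k])
      (Finset.mem_Icc.2 ⟨hn1, le_rfl⟩)).trans hn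
  have hle := limsup_log_div_le_log_of_eventually_le_mul_pow hψ' (by linarith) hψC
  rw [h] at hle
  exact (Real.log_lt_log (by linarith) hrB).not_ge hle
end

section
/- Let ψ : ℕ → ℕ satisfy ψ(n)/n → ∞, and suppose x ∈ [0,1) is irrational with limsup_{n→∞} (log a₁(x)+⋯+log aₙ(x))/ψ(n) = 1. Then for every δ ∈ (0,1) there exist infinitely many indices i such that log a_i(x) ≥ (1−δ)·ψ(n)/(2n) for some n ≥ i with log a₁(x)+⋯+log aₙ(x) ≥ (1−δ)ψ(n). -/
open Filter MeasureTheory Set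
open scoped ENNReal

noncomputable def gaussMap (x : ℝ) : ℝ := Int.fract (1 / x)

/-- The `n`-th partial quotient of the continued fraction expansion of `x` (for `n ≥ 1`). -/
noncomputable def cfA (n : ℕ) (x : ℝ) : ℕ := ⌊1 / (gaussMap^[n - 1] x)⌋₊

/-!
Since `S_n(x) ≥ (1 - δ) ψ(n)` for infinitely many `n` and `ψ(n) → ∞`, for each `N` one finds such
an `n > N` with `S_N(x) ≤ (1 - δ) ψ(n) / 2`. The at most `n` terms `log a_j(x)`, `N < j ≤ n`, then
sum to at least `(1 - δ) ψ(n) / 2`, so one of them is at least `(1 - δ) ψ(n) / (2n)`.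
-/

lemma tendsto_atTop_of_tendsto_div_natCast {f : ℕ → ℝ} (hf : ∀ n, 0 ≤ f n)
    (h : Tendsto (fun n => f n / n) atTop atTop) : Tendsto f atTop atTop :=
  tendsto_atTop_mono' _ ((eventually_ge_atTop 1).mono fun n hn =>
    div_le_self (hf n) (by exact_mod_cast hn)) h

lemma frequently_mul_le_of_lt_limsup_div {ι : Type*} {l : Filter ι} [NeBot l] {f g : ι → ℝ}
    (hf : ∀ i, 0 ≤ f i) (hg : ∀ i, 0 ≤ g i) {c : ℝ}
    (hc : c < limsup (fun i => f i / g i) l) : ∃ᶠ i in l, c * g i ≤ f i := by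
  have hcobdd : IsCoboundedUnder (· ≤ ·) l (fun i => f i / g i) :=
    isCoboundedUnder_le_of_le l fun i => div_nonneg (hf i) (hg i)
  refine (frequently_lt_of_lt_limsup hcobdd hc).mono fun i hi => ?_
  rcases (hg i).eq_or_lt with hg0 | hgpos
  · simp [← hg0, hf i]
  · exact ((lt_div_iff₀ hgpos).1 hi).le

lemma exists_div_le_of_le_sum_Ioc (a : ℕ → ℝ) {N n : ℕ} (hNn : N < n) {c : ℝ} (hc : 0 ≤ c)
    (h : c ≤ ∑ j ∈ Finset.Ioc N n, a j) : ∃ i ∈ Finset.Ioc N n, c / n ≤ a i := by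
  refine Finset.exists_le_of_sum_le ⟨n, Finset.mem_Ioc.2 ⟨hNn, le_rfl⟩⟩ (le_trans ?_ h)
  have hn : (0 : ℝ) < n := by exact_mod_cast N.zero_le.trans_lt hNn
  calc ∑ _j ∈ Finset.Ioc N n, c / n = (n - N : ℕ) * (c / n) := by simp
    _ ≤ n * (c / n) := by gcongr; exact_mod_cast Nat.sub_le n N
    _ = c := by field_simp

theorem exists_le_term_of_frequently_mul_le_sum (a : ℕ → ℝ) {ψ : ℕ → ℝ}
    (hψ : Tendsto ψ atTop atTop) {c : ℝ} (hc : 0 < c)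
    (hfreq : ∃ᶠ n in atTop, c * ψ n ≤ ∑ j ∈ Finset.Icc 1 n, a j) (N : ℕ) :
    ∃ i ≥ N, ∃ n ≥ i, c * ψ n / (2 * n) ≤ a i ∧ c * ψ n ≤ ∑ j ∈ Finset.Icc 1 n, a j := by
  have hev : ∀ᶠ n in atTop, N < n ∧ 0 ≤ ψ n ∧ ∑ j ∈ Finset.Icc 1 N, a j ≤ c * ψ n / 2 := by
    filter_upwards [eventually_gt_atTop N, hψ.eventually_ge_atTop 0,
      hψ.eventually_ge_atTop (2 * (∑ j ∈ Finset.Icc 1 N, a j) / c)] with n hNn hψ0 hψN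
    refine ⟨hNn, hψ0, ?_⟩
    rw [div_le_iff₀ hc] at hψN
    linarith
  obtain ⟨n, hSn, hNn, hψ0, hSN⟩ := (hfreq.and_eventually hev).exists
  have htail : c * ψ n / 2 ≤ ∑ j ∈ Finset.Ioc N n, a j := by
    have hsplit := Finset.sum_Ioc_consecutive a N.zero_le hNn.le
    rw [← Finset.Icc_add_one_left_eq_Ioc 0 N, ← Finset.Icc_add_one_left_eq_Ioc 0 n, zero_add] at hsplit
    linarith
  obtain ⟨i, hi, hai⟩ := exists_div_le_of_le_sum_Ioc a hNn (by positivity) htail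
  rw [Finset.mem_Ioc] at hi
  exact ⟨i, hi.1.le, n, hi.2, by rwa [div_div] at hai, hSn⟩

theorem stmt5_general (ψ : ℕ → ℕ) (hψ : Tendsto (fun n => (ψ n : ℝ) / n) atTop atTop)
    (x : ℝ)
    (h : limsup (fun n => (∑ j ∈ Finset.Icc 1 n, Real.log (cfA j x)) / (ψ n : ℝ)) atTop = 1)
    (δ : ℝ) (hδ : δ ∈ Set.Ioo (0 : ℝ) 1) :
    ∀ N : ℕ, ∃ i ≥ N, ∃ n ≥ i,
      Real.log (cfA i x) ≥ (1 - δ) * ψ n / (2 * n) ∧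
        (∑ j ∈ Finset.Icc 1 n, Real.log (cfA j x)) ≥ (1 - δ) * ψ n := by
  have hfreq : ∃ᶠ n in atTop, (1 - δ) * ψ n ≤ ∑ j ∈ Finset.Icc 1 n, Real.log (cfA j x) :=
    frequently_mul_le_of_lt_limsup_div
      (fun n => Finset.sum_nonneg fun j _ => Real.log_natCast_nonneg _)
      (fun n => Nat.cast_nonneg _) (by rw [h]; linarith [hδ.1])
  exact exists_le_term_of_frequently_mul_le_sum _
    (tendsto_atTop_of_tendsto_div_natCast (fun n => Nat.cast_nonneg _) hψ)
    (by linarith [hδ.2]) hfreq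

theorem stmt5 (ψ : ℕ → ℕ) (hψ : Tendsto (fun n => (ψ n : ℝ) / n) atTop atTop)
    (x : ℝ) (hx : x ∈ Set.Ico (0 : ℝ) 1) (hirr : Irrational x)
    (h : limsup (fun n => (∑ j ∈ Finset.Icc 1 n, Real.log (cfA j x)) / (ψ n : ℝ)) atTop = 1)
    (δ : ℝ) (hδ : δ ∈ Set.Ioo (0 : ℝ) 1) :
    ∀ N : ℕ, ∃ i ≥ N, ∃ n ≥ i,
      Real.log (cfA i x) ≥ (1 - δ) * ψ n / (2 * n) ∧
        (∑ j ∈ Finset.Icc 1 n, Real.log (cfA j x)) ≥ (1 - δ) * ψ n :=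
  stmt5_general ψ hψ x h δ hδ
end

section
/- Let ψ : ℕ → ℕ with ψ(n)/n → ∞ and liminf_{n→∞} (log ψ(n))/n = log b where 1 < b < ∞. Then the set of x ∈ [0,1) with limsup_{n→∞} (Σ_{j=1}^n log a_j(x))/ψ(n) = 1 is contained, for every ε ∈ (0, (b−1)/2), in the set of x such that a_i(x) > e^{(b−2ε)^i} for infinitely many i. -/
open Filter MeasureTheory Set
open scoped ENNReal

/-!
If `a_i(x) ≤ exp (B ^ i)` for all large `i`, with `B = b - 2ε ∈ (1, b)`, then the partial sums
`∑_{j ≤ n} log a_j(x)` are `O(B ^ n)`. Since their ratio to `ψ n` has limsup `1`, infinitely often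
`ψ n ≤ 2 C B ^ n`, which forces `liminf log (ψ n) / n ≤ log B < log b`.
-/

open Finset Real

lemma Real.log_le_of_le_exp {x y : ℝ} (hx : 0 ≤ x) (hy : 0 ≤ y) (h : x ≤ exp y) : log x ≤ y := by
  rcases hx.eq_or_lt with rfl | hx
  · simpa using hy
  · exact (log_le_iff_le_exp hx).2 h

lemma exists_forall_le_mul_pow_of_eventually_le {f : ℕ → ℝ} {B : ℝ} (hf : ∀ i, 0 ≤ f i)
    (hB : 1 ≤ B) (h : ∀ᶠ i in atTop, f i ≤ B ^ i) : ∃ K, ∀ i, f i ≤ K * B ^ i := by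
  obtain ⟨N, hN⟩ := eventually_atTop.1 h
  refine ⟨∑ j ∈ range N, f j + 1, fun i => ?_⟩
  have hBi : 1 ≤ B ^ i := one_le_pow₀ hB
  have hsum : 0 ≤ ∑ j ∈ range N, f j := sum_nonneg fun j _ => hf j
  rcases lt_or_ge i N with hi | hi
  · have := single_le_sum (fun j _ => hf j) (mem_range.2 hi)
    nlinarith
  · nlinarith [hN i hi]

lemma geom_sum_le_div_sub_one_mul_pow {B : ℝ} (hB : 1 < B) (n : ℕ) :
    ∑ i ∈ range (n + 1), B ^ i ≤ B / (B - 1) * B ^ n := by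
  rw [geom_sum_eq hB.ne', div_mul_eq_mul_div, ← pow_succ']
  exact div_le_div_of_nonneg_right (sub_le_self _ zero_le_one) (sub_nonneg.2 hB.le)

lemma exists_sum_range_le_mul_pow_of_eventually_le {f : ℕ → ℝ} {B : ℝ} (hf : ∀ i, 0 ≤ f i)
    (hB : 1 < B) (h : ∀ᶠ i in atTop, f i ≤ B ^ i) :
    ∃ C, ∀ n, ∑ i ∈ range (n + 1), f i ≤ C * B ^ n := by
  obtain ⟨K, hK⟩ := exists_forall_le_mul_pow_of_eventually_le hf hB.le h
  have hK0 : 0 ≤ K := by simpa using (hf 0).trans (hK 0)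
  refine ⟨K * (B / (B - 1)), fun n => ?_⟩
  calc ∑ i ∈ range (n + 1), f i ≤ ∑ i ∈ range (n + 1), K * B ^ i := sum_le_sum fun i _ => hK i
    _ = K * ∑ i ∈ range (n + 1), B ^ i := (mul_sum ..).symm
    _ ≤ K * (B / (B - 1) * B ^ n) := by gcongr; exact geom_sum_le_div_sub_one_mul_pow hB n
    _ = K * (B / (B - 1)) * B ^ n := by ring

lemma frequently_pos_and_mul_lt_of_lt_limsup_div {u v : ℕ → ℝ} {c : ℝ} (hu : ∀ n, 0 ≤ u n)
    (hv : ∀ n, 0 ≤ v n) (hc : 0 ≤ c) (h : c < limsup (fun n => u n / v n) atTop) :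
    ∃ᶠ n in atTop, 0 < v n ∧ c * v n < u n := by
  have hbdd : IsCoboundedUnder (· ≤ ·) atTop (fun n => u n / v n) :=
    (isBoundedUnder_of ⟨0, fun n => div_nonneg (hu n) (hv n)⟩).isCoboundedUnder_le
  refine (frequently_lt_of_lt_limsup hbdd h).mono fun n hn => ?_
  have hvn : 0 < v n := (hv n).lt_of_ne fun h0 => by simp [← h0] at hn; linarith
  exact ⟨hvn, (lt_div_iff₀ hvn).1 hn⟩

lemma liminf_log_div_le_log_of_frequently_le {ψ : ℕ → ℕ} {C B : ℝ} (hB : 0 < B)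
    (h : ∃ᶠ n in atTop, 0 < ψ n ∧ (ψ n : ℝ) ≤ C * B ^ n) :
    liminf (fun n => log (ψ n) / n) atTop ≤ log B := by
  refine le_of_forall_gt_imp_ge_of_dense fun c hc => ?_
  have hlim : Tendsto (fun n : ℕ => log C / n + log B) atTop (nhds (log B)) := by
    simpa using (tendsto_const_div_atTop_nhds_zero_nat (log C)).add_const (log B)
  have hev := (hlim.eventually (gt_mem_nhds hc)).and (eventually_gt_atTop 0)
  refine liminf_le_of_frequently_le ((h.and_eventually hev).mono ?_)
    (isBoundedUnder_of ⟨0, fun n => div_nonneg (log_natCast_nonneg _) n.cast_nonneg⟩)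
  rintro n ⟨⟨hψ, hle⟩, hlt, hn⟩
  have hψ' : (0 : ℝ) < ψ n := by exact_mod_cast hψ
  have hC : 0 < C := pos_of_mul_pos_left (hψ'.trans_le hle) (pow_pos hB n).le
  have hn' : (0 : ℝ) < n := by exact_mod_cast hn
  calc log (ψ n) / n ≤ log (C * B ^ n) / n := by gcongr
    _ = log C / n + log B := by
      rw [log_mul hC.ne' (pow_pos hB n).ne', log_pow]; field_simp
    _ ≤ c := hlt.le

theorem stmt6_general (ψ : ℕ → ℕ)
    (b : ℝ)
    (hliminf : liminf (fun n => Real.log (ψ n) / n) atTop = Real.log b)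
    (ε : ℝ) (hε : ε ∈ Set.Ioo 0 ((b - 1) / 2)) :
    {x ∈ Set.Ico (0 : ℝ) 1 |
        limsup (fun n => (∑ j ∈ Finset.Icc 1 n, Real.log (cfA j x)) / (ψ n : ℝ)) atTop = 1} ⊆
      {x : ℝ | ∀ N : ℕ, ∃ i ≥ N, (cfA i x : ℝ) > Real.exp ((b - 2 * ε) ^ i)} := by
  rintro x ⟨-, hlimsup⟩
  simp only [mem_ofPred_eq]
  by_contra! hx
  obtain ⟨N, hN⟩ := hx
  set B := b - 2 * ε
  have hB : 1 < B := by linarith [hε.1, hε.2]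
  have hlog : ∀ j, 0 ≤ log (cfA j x) := fun j => log_natCast_nonneg _
  obtain ⟨C, hC⟩ := exists_sum_range_le_mul_pow_of_eventually_le hlog hB <|
    eventually_atTop.2 ⟨N, fun i hi =>
      log_le_of_le_exp (Nat.cast_nonneg _) (pow_nonneg (by linarith) i) (hN i hi)⟩
  have hsum : ∀ n, ∑ j ∈ Icc 1 n, log (cfA j x) ≤ C * B ^ n := fun n =>
    (sum_le_sum_of_subset_of_nonneg
      (fun j hj => by simp only [Finset.mem_Icc, Finset.mem_range] at hj ⊢; omega)
      fun j _ _ => hlog j).trans (hC n)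
  have hfreq : ∃ᶠ n in atTop, 0 < ψ n ∧ (ψ n : ℝ) ≤ 2 * C * B ^ n := by
    refine (frequently_pos_and_mul_lt_of_lt_limsup_div (c := 1 / 2)
      (u := fun n => ∑ j ∈ Icc 1 n, log (cfA j x)) (fun n => sum_nonneg fun j _ => hlog j)
      (fun n => Nat.cast_nonneg (ψ n)) (by norm_num)
      (by rw [hlimsup]; norm_num)).mono fun n ⟨hψ, hlt⟩ => ⟨by exact_mod_cast hψ, ?_⟩
    linarith [hsum n]
  have hle := liminf_log_div_le_log_of_frequently_le (by linarith) hfreq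
  rw [hliminf] at hle
  linarith [log_lt_log (by linarith) (show B < b by linarith [hε.1])]

theorem stmt6 (ψ : ℕ → ℕ) (hψ : Tendsto (fun n => (ψ n : ℝ) / n) atTop atTop)
    (b : ℝ) (hb : 1 < b)
    (hliminf : liminf (fun n => Real.log (ψ n) / n) atTop = Real.log b)
    (ε : ℝ) (hε : ε ∈ Set.Ioo 0 ((b - 1) / 2)) :
    {x ∈ Set.Ico (0 : ℝ) 1 |
        limsup (fun n => (∑ j ∈ Finset.Icc 1 n, Real.log (cfA j x)) / (ψ n : ℝ)) atTop = 1} ⊆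
      {x : ℝ | ∀ N : ℕ, ∃ i ≥ N, (cfA i x : ℝ) > Real.exp ((b - 2 * ε) ^ i)} :=
  stmt6_general ψ b hliminf ε hε
end

section
/- With ψ, B, ε, A_i as above (A_i = max_{n≥i} exp{ψ(n)(B+ε)^{i−n}}, 0 < ε < B−1), the quantity Z := liminf_{n→∞} (Σ_{i=1}^n log A_i)/ψ(n) satisfies 1 ≤ Z < ∞. -/
/-! With `r = B + ε`, `L i = log A i` is the maximum of `ψ n * r ^ (i - n)` over `n ≥ i`,
so `ψ n ≤ L n` (whence `Z ≥ 1`) and `L i ≤ r ^ (i - n) * L n` for `n ≤ i`.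
Let `S n = ∑_{i ≤ n} L i` and fix `1 < θ < B`. Infinitely often `(θ - 1) S n ≤ θ L n`:
otherwise `S (n + 1) ≤ θ S n` eventually, so `ψ n ≤ S n = O(θ ^ n)`, against
`limsup log ψ(n) / n = log B`. For such an `n` pick `m ≥ n` attaining
`L n = ψ m * r ^ (n - m) ≤ ψ m`; then `L i ≤ ψ m * r ^ (i - m)` for `n < i ≤ m`,
and summing the geometric tail gives `S m ≤ (θ / (θ - 1) + 1 / (1 - r⁻¹)) ψ m`. -/

open Filter Real Finset

lemma isGreatest_log_of_isGreatest_exp {P : ℕ → Prop} {g : ℕ → ℝ} {a : ℝ}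
    (h : IsGreatest {y | ∃ n, P n ∧ y = exp (g n)} a) :
    IsGreatest {y | ∃ n, P n ∧ y = g n} (log a) := by
  obtain ⟨⟨n, hn, rfl⟩, hmax⟩ := h
  refine ⟨⟨n, hn, log_exp _⟩, ?_⟩
  rintro _ ⟨m, hm, rfl⟩
  rw [log_exp, ← exp_le_exp]
  exact hmax ⟨m, hm, rfl⟩

lemma sum_zpow_sub_le_inv_one_sub_inv {r : ℝ} (hr : 1 < r) {s : Finset ℕ} {m : ℕ}
    (hs : s ⊆ range (m + 1)) : ∑ i ∈ s, r ^ ((i : ℤ) - m) ≤ (1 - r⁻¹)⁻¹ := by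
  have hr0 : 0 < r := one_pos.trans hr
  calc ∑ i ∈ s, r ^ ((i : ℤ) - m) ≤ ∑ i ∈ range (m + 1), r ^ ((i : ℤ) - m) :=
        sum_le_sum_of_subset_of_nonneg hs fun _ _ _ => by positivity
    _ = ∑ j ∈ range (m + 1), r⁻¹ ^ j := by
        rw [← sum_range_reflect]
        refine sum_congr rfl fun j hj => ?_
        rw [inv_pow, ← zpow_natCast, ← zpow_neg,
          Nat.cast_sub (by simpa [Nat.lt_succ_iff] using hj)]
        push_cast
        ring_nf
    _ ≤ (1 - r⁻¹)⁻¹ := by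
        simpa using geom_sum_Ico_le_of_lt_one (m := 0) (n := m + 1) (by positivity)
          (inv_lt_one_of_one_lt₀ hr)

lemma limsup_log_div_le_log_of_le_mul_pow {u : ℕ → ℝ} (hu : ∀ n, 1 ≤ u n) {C θ : ℝ}
    (hθ : 0 < θ) (hb : ∀ᶠ n in atTop, u n ≤ C * θ ^ n) :
    limsup (fun n => log (u n) / n) atTop ≤ log θ := by
  obtain ⟨N, hN⟩ := eventually_atTop.1 hb
  have hC : 0 < C :=
    pos_of_mul_pos_left (one_pos.trans_le ((hu N).trans (hN N le_rfl))) (pow_pos hθ N).le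
  have hlim : Tendsto (fun n : ℕ => log C / n + log θ) atTop (nhds (log θ)) := by
    simpa using (tendsto_const_div_atTop_nhds_zero_nat (log C)).add_const (log θ)
  rw [← hlim.limsup_eq]
  refine limsup_le_limsup ?_ (isCoboundedUnder_le_of_le atTop fun n =>
    div_nonneg (log_nonneg (hu n)) n.cast_nonneg) hlim.isBoundedUnder_le
  filter_upwards [hb, eventually_gt_atTop 0] with n hn hn0
  rw [div_add' _ _ _ (by positivity), div_le_div_iff_of_pos_right (by positivity)]
  calc log (u n) ≤ log (C * θ ^ n) := log_le_log (one_pos.trans_le (hu n)) hn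
    _ = log C + log θ * n := by rw [log_mul hC.ne' (pow_pos hθ n).ne', log_pow, mul_comm]

lemma eventually_le_mul_pow_of_eventually_le_mul {S : ℕ → ℝ} {θ : ℝ} (hθ : 0 < θ)
    (h : ∀ᶠ n in atTop, S (n + 1) ≤ θ * S n) :
    ∃ C, ∀ᶠ n in atTop, S n ≤ C * θ ^ n := by
  obtain ⟨N, hN⟩ := eventually_atTop.1 h
  refine ⟨S N / θ ^ N, eventually_atTop.2 ⟨N, fun n hn => ?_⟩⟩
  obtain ⟨j, rfl⟩ := Nat.exists_eq_add_of_le hn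
  calc S (N + j) ≤ θ ^ j * S N :=
        le_geom (u := fun k => S (N + k)) hθ.le j fun k _ => hN (N + k) (by omega)
    _ = S N / θ ^ N * θ ^ (N + j) := by
        rw [pow_add]
        field_simp

def IsDiscountedMax (f : ℕ → ℝ) (r : ℝ) (L : ℕ → ℝ) : Prop :=
  ∀ i, IsGreatest {y | ∃ n ≥ i, y = f n * r ^ ((i : ℤ) - n)} (L i)

namespace IsDiscountedMax

variable {f : ℕ → ℝ} {r : ℝ} {L : ℕ → ℝ}

lemma mul_zpow_le (hL : IsDiscountedMax f r L) {i m : ℕ} (him : i ≤ m) :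
    f m * r ^ ((i : ℤ) - m) ≤ L i :=
  (hL i).2 ⟨m, him, rfl⟩

lemma le_zpow_sub_mul (hL : IsDiscountedMax f r L) (hr : 0 < r) {i j : ℕ} (hij : i ≤ j) :
    L j ≤ r ^ ((j : ℤ) - i) * L i := by
  obtain ⟨n, hjn, hn⟩ := (hL j).1
  rw [hn, show (j : ℤ) - n = (j - i) + (i - n) by ring, zpow_add₀ hr.ne', mul_left_comm]
  exact mul_le_mul_of_nonneg_left (hL.mul_zpow_le (hij.trans hjn)) (zpow_nonneg hr.le _)

lemma le_sum_Icc_one (hL : IsDiscountedMax f r L) (hf : ∀ n, 0 ≤ f n) {n : ℕ} (hn : 1 ≤ n) :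
    f n ≤ ∑ i ∈ Icc 1 n, L i := by
  have self_le : ∀ i, f i ≤ L i := fun i => by simpa using hL.mul_zpow_le (le_refl i)
  exact (self_le n).trans <| single_le_sum (fun i _ => (hf i).trans (self_le i))
    (mem_Icc.2 ⟨hn, le_rfl⟩)

lemma sum_Ioc_le_mul (hL : IsDiscountedMax f r L) (hr : 1 < r) {n m : ℕ} (hfm : 0 ≤ f m)
    (hLn : L n = f m * r ^ ((n : ℤ) - m)) :
    ∑ i ∈ Ioc n m, L i ≤ (1 - r⁻¹)⁻¹ * f m := by
  have hr0 : 0 < r := one_pos.trans hr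
  calc ∑ i ∈ Ioc n m, L i ≤ ∑ i ∈ Ioc n m, f m * r ^ ((i : ℤ) - m) := by
        refine sum_le_sum fun i hi => ?_
        calc L i ≤ r ^ ((i : ℤ) - n) * L n := hL.le_zpow_sub_mul hr0 (mem_Ioc.1 hi).1.le
          _ = f m * r ^ ((i : ℤ) - m) := by
              rw [hLn, mul_left_comm, ← zpow_add₀ hr0.ne']
              ring_nf
    _ = f m * ∑ i ∈ Ioc n m, r ^ ((i : ℤ) - m) := (mul_sum ..).symm
    _ ≤ f m * (1 - r⁻¹)⁻¹ := by
        gcongr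
        exact sum_zpow_sub_le_inv_one_sub_inv hr fun i hi => by
          simpa [Nat.lt_succ_iff] using (mem_Ioc.1 hi).2
    _ = (1 - r⁻¹)⁻¹ * f m := mul_comm ..

lemma frequently_sub_one_mul_sum_le (hL : IsDiscountedMax f r L) (hf : ∀ n, 1 ≤ f n)
    {B θ : ℝ} (hθ : 1 < θ) (hθB : θ < B)
    (h : limsup (fun n => log (f n) / n) atTop = log B) :
    ∃ᶠ n in atTop, (θ - 1) * ∑ i ∈ Icc 1 n, L i ≤ θ * L n := by
  by_contra hcon
  simp only [not_frequently, not_le] at hcon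
  have hstep : ∀ᶠ n in atTop, ∑ i ∈ Icc 1 (n + 1), L i ≤ θ * ∑ i ∈ Icc 1 n, L i := by
    filter_upwards [(tendsto_add_atTop_nat 1).eventually hcon] with n hn
    rw [sum_Icc_succ_top (by omega)] at hn ⊢
    -- `θ L (n+1) < (θ - 1) (S n + L (n+1))` says exactly `L (n+1) < (θ - 1) S n`
    nlinarith
  obtain ⟨C, hC⟩ := eventually_le_mul_pow_of_eventually_le_mul
    (S := fun n => ∑ i ∈ Icc 1 n, L i) (one_pos.trans hθ) hstep
  have hbound : ∀ᶠ n in atTop, f n ≤ C * θ ^ n := by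
    filter_upwards [hC, eventually_ge_atTop 1] with n hn hn1
    exact (hL.le_sum_Icc_one (fun i => zero_le_one.trans (hf i)) hn1).trans hn
  have hlog := limsup_log_div_le_log_of_le_mul_pow hf (one_pos.trans hθ) hbound
  rw [h] at hlog
  exact hlog.not_gt (log_lt_log (one_pos.trans hθ) hθB)

lemma exists_frequently_sum_le_mul (hL : IsDiscountedMax f r L)
    (hf : ∀ n, 1 ≤ f n) (hr : 1 < r) {B : ℝ} (hB : 1 < B)
    (h : limsup (fun n => log (f n) / n) atTop = log B) :
    ∃ M, ∃ᶠ m in atTop, ∑ i ∈ Icc 1 m, L i ≤ M * f m := by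
  obtain ⟨θ, hθ, hθB⟩ := exists_between hB
  refine ⟨θ / (θ - 1) + (1 - r⁻¹)⁻¹, frequently_atTop.2 fun N => ?_⟩
  obtain ⟨n, hNn, hn⟩ := frequently_atTop.1 (hL.frequently_sub_one_mul_sum_le hf hθ hθB h) N
  obtain ⟨m, hnm, hLn⟩ := (hL n).1
  have hLn_le : L n ≤ f m := by
    rw [hLn]
    exact mul_le_of_le_one_right (zero_le_one.trans (hf m))
      (zpow_le_one_of_nonpos₀ hr.le (by omega))
  have hSn : ∑ i ∈ Icc 1 n, L i ≤ θ / (θ - 1) * f m := by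
    rw [div_mul_eq_mul_div, le_div_iff₀ (by linarith), mul_comm]
    exact hn.trans (mul_le_mul_of_nonneg_left hLn_le (by linarith))
  refine ⟨m, hNn.trans hnm, ?_⟩
  have hIcc : ∀ k, Icc 1 k = Ioc 0 k := fun k => Icc_add_one_left_eq_Ioc 0 k
  rw [hIcc, ← sum_Ioc_consecutive _ (Nat.zero_le n) hnm, ← hIcc, add_mul]
  exact add_le_add hSn (hL.sum_Ioc_le_mul hr (zero_le_one.trans (hf m)) hLn)

end IsDiscountedMax

theorem stmt15_general (ψ : ℕ → ℕ) (hψ : ∀ n, 1 ≤ ψ n)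
    (B : ℝ) (hB : 1 < B)
    (h : limsup (fun n => Real.log (ψ n) / n) atTop = Real.log B)
    (ε : ℝ) (hε : 0 < ε)
    (A : ℕ → ℝ)
    (hA : ∀ i, IsGreatest
      {y | ∃ n ≥ i, y = Real.exp ((ψ n : ℝ) * (B + ε) ^ ((i : ℤ) - n))} (A i)) :
    1 ≤ liminf (fun n => (((∑ i ∈ Finset.Icc 1 n, Real.log (A i)) / (ψ n : ℝ) : ℝ) : EReal))
        atTop ∧
      liminf (fun n => (((∑ i ∈ Finset.Icc 1 n, Real.log (A i)) / (ψ n : ℝ) : ℝ) : EReal))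
        atTop < ⊤ := by
  have hL : IsDiscountedMax (fun n => (ψ n : ℝ)) (B + ε) (fun i => log (A i)) :=
    fun i => isGreatest_log_of_isGreatest_exp (hA i)
  have hf : ∀ n, (1 : ℝ) ≤ ψ n := fun n => by exact_mod_cast hψ n
  have hψ0 : ∀ n, (0 : ℝ) < ψ n := fun n => one_pos.trans_le (hf n)
  constructor
  · refine le_liminf_of_le (by isBoundedDefault) (eventually_atTop.2 ⟨1, fun n hn => ?_⟩)
    exact_mod_cast (one_le_div (hψ0 n)).2 (hL.le_sum_Icc_one (fun n => (hψ0 n).le) hn)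
  · obtain ⟨M, hM⟩ := hL.exists_frequently_sum_le_mul hf (by linarith) hB h
    refine (liminf_le_of_frequently_le' (hM.mono fun n hn => ?_)).trans_lt
      (EReal.coe_lt_top M)
    exact_mod_cast (div_le_iff₀ (hψ0 n)).2 hn

theorem stmt15 (ψ : ℕ → ℕ) (hψ : ∀ n, 1 ≤ ψ n)
    (hψ' : Tendsto (fun n => (ψ n : ℝ) / n) atTop atTop)
    (B : ℝ) (hB : 1 < B)
    (h : limsup (fun n => Real.log (ψ n) / n) atTop = Real.log B)
    (ε : ℝ) (hε : 0 < ε) (hε' : ε < B - 1)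
    (A : ℕ → ℝ)
    (hA : ∀ i, IsGreatest
      {y | ∃ n ≥ i, y = Real.exp ((ψ n : ℝ) * (B + ε) ^ ((i : ℤ) - n))} (A i)) :
    1 ≤ liminf (fun n => (((∑ i ∈ Finset.Icc 1 n, Real.log (A i)) / (ψ n : ℝ) : ℝ) : EReal))
        atTop ∧
      liminf (fun n => (((∑ i ∈ Finset.Icc 1 n, Real.log (A i)) / (ψ n : ℝ) : ℝ) : EReal))
        atTop < ⊤ :=
  stmt15_general ψ hψ B hB h ε hε A hA
end
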